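/- Let H ≤ GL(d,ℝ) be irreducibly admissible with dual orbit 𝒪 = {hᵀξ₀ : h ∈ H}, and assume additionally that 𝒪^c is closed under multiplication by positive scalars. Let U ⊆ H be a compact neighborhood of the identity in H contained in {u : ‖u − I‖ < 1/2}. Then there is C ≥ 1 such that for every h ∈ H and every ℓ ∈ ℕ: A_H(h)^ℓ ≤ sup_{u∈U} A_H(hu)^ℓ ≤ C^ℓ · A_H(h)^ℓ. In particular, for any weight m on H, ∫_H sup_{u∈U} A_H(hu)^ℓ m(h) dμ_H(h) < ∞ if and only if ∫_H A_H(h)^ℓ m(h) dμ_H(h) < ∞. -/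

import Mathlib

open MeasureTheory Matrix Metric

noncomputable section

variable {n : Type*} [Fintype n] [DecidableEq n]

/-- The dual action `ξ ↦ hᵀ ξ` of a matrix on Euclidean space. -/
def dualAct (h : Matrix n n ℝ) (ξ : EuclideanSpace ℝ n) : EuclideanSpace ℝ n :=
  (EuclideanSpace.equiv n ℝ).symm (h.transpose.mulVec (EuclideanSpace.equiv n ℝ ξ))

/-- The envelope function `A_S` of a set `S` (with respect to Euclidean norm and distance). -/
def env (S : Set (EuclideanSpace ℝ n)) (ξ : EuclideanSpace ℝ n) : ℝ :=
  min (infDist ξ S / (1 + Real.sqrt (‖ξ‖ ^ 2 - infDist ξ S ^ 2))) (1 / (1 + ‖ξ‖))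

/-- The Euclidean operator norm of a matrix. -/
def opNorm (m : Matrix n n ℝ) : ℝ :=
  ‖LinearMap.toContinuousLinearMap (Matrix.toEuclideanLin m)‖

/-- The dual orbit of `ξ₀` under a subgroup `H ≤ GL(d,ℝ)`. -/
def dualOrbit (H : Subgroup (GL n ℝ)) (ξ₀ : EuclideanSpace ℝ n) : Set (EuclideanSpace ℝ n) :=
  {ξ | ∃ h : GL n ℝ, h ∈ H ∧ dualAct (↑h) ξ₀ = ξ}

/-- The envelope function pulled back to the group: `A_H(h) = A_𝒪(hᵀ ξ₀)`. -/
def AH (H : Subgroup (GL n ℝ)) (ξ₀ : EuclideanSpace ℝ n) (h : ↥H) : ℝ :=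
  env (dualOrbit H ξ₀)ᶜ (dualAct (↑(h : GL n ℝ)) ξ₀)

end

/-!
Up to a factor `3`, the envelope `A_𝒪(ξ)` is `min (dist(ξ, 𝒪ᶜ), 1) / (1 + |ξ|)`. For
`‖u - 1‖ < 1/2` the map `ξ ↦ uᵀξ` preserves `𝒪ᶜ`, is `2`-Lipschitz and shrinks no vector by more
than a factor `2`, so it changes this proxy by at most a factor `4`. Hence
`A_H(hu) ≤ 12 A_H(h)` for `u ∈ U`, while `1 ∈ U` gives the lower bound; the two integrability
conditions are then equivalent because their integrands are comparable.
-/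

noncomputable section Envelope

variable {n : Type*} [Fintype n]

def envApprox (S : Set (EuclideanSpace ℝ n)) (ξ : EuclideanSpace ℝ n) : ℝ :=
  min (infDist ξ S) 1 / (1 + ‖ξ‖)

lemma envApprox_le_env (S : Set (EuclideanSpace ℝ n)) (ξ : EuclideanSpace ℝ n) :
    envApprox S ξ ≤ env S ξ := by
  have hδ : 0 ≤ infDist ξ S := infDist_nonneg
  have hr : 0 ≤ ‖ξ‖ := norm_nonneg ξ
  have hsqrt : Real.sqrt (‖ξ‖ ^ 2 - infDist ξ S ^ 2) ≤ ‖ξ‖ :=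
    Real.sqrt_le_iff.2 ⟨hr, by nlinarith⟩
  refine le_min ?_ ?_
  · exact div_le_div₀ hδ (min_le_left _ _) (by positivity) (by linarith)
  · exact div_le_div_of_nonneg_right (min_le_right _ _) (by positivity)

lemma env_le_three_mul_envApprox (S : Set (EuclideanSpace ℝ n)) (ξ : EuclideanSpace ℝ n) :
    env S ξ ≤ 3 * envApprox S ξ := by
  unfold env envApprox
  set δ := infDist ξ S
  set r := ‖ξ‖
  set s := Real.sqrt (r ^ 2 - δ ^ 2)
  have hδ : 0 ≤ δ := infDist_nonneg
  have hr : 0 ≤ r := norm_nonneg ξ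
  have hs : 0 ≤ s := Real.sqrt_nonneg _
  rcases le_or_gt 1 δ with hδ1 | hδ1
  · rw [min_eq_right hδ1]
    have : 0 ≤ 1 / (1 + r) := by positivity
    linarith [min_le_right (δ / (1 + s)) (1 / (1 + r))]
  rw [min_eq_left hδ1.le]
  refine (min_le_left _ _).trans ?_
  rw [mul_div_assoc', div_le_div_iff₀ (by positivity) (by positivity)]
  rcases le_or_gt δ (r / 2) with hδr | hδr
  · have hsr : r / 2 ≤ s := Real.le_sqrt_of_sq_le (by nlinarith)
    nlinarith [mul_nonneg hδ hs]
  · nlinarith [mul_nonneg hδ hs]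

lemma envApprox_le_four_mul {S : Set (EuclideanSpace ℝ n)} {ξ η : EuclideanSpace ℝ n}
    (hdist : infDist η S ≤ 2 * infDist ξ S) (hnorm : ‖ξ‖ ≤ 2 * ‖η‖) :
    envApprox S η ≤ 4 * envApprox S ξ := by
  have hmin : min (infDist η S) 1 ≤ 2 * min (infDist ξ S) 1 := by
    rw [mul_min_of_nonneg _ _ zero_le_two]
    exact min_le_min hdist (by norm_num)
  unfold envApprox
  rw [mul_div_assoc', div_le_div_iff₀ (by positivity) (by positivity)]
  have : 0 ≤ min (infDist η S) 1 := le_min infDist_nonneg zero_le_one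
  nlinarith [norm_nonneg η]

lemma env_nonneg (S : Set (EuclideanSpace ℝ n)) (ξ : EuclideanSpace ℝ n) : 0 ≤ env S ξ :=
  (div_nonneg (le_min infDist_nonneg zero_le_one) (by positivity)).trans (envApprox_le_env S ξ)

end Envelope

lemma infDist_le_mul_infDist_of_mapsTo {α : Type*} [PseudoMetricSpace α] {f : α → α}
    {K : NNReal} {S : Set α} (hf : LipschitzWith K f) (hS : Set.MapsTo f S S) (x : α) :
    infDist (f x) S ≤ K * infDist x S := by
  rcases S.eq_empty_or_nonempty with rfl | hne
  · simp
  have : Nonempty S := hne.to_subtype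
  rw [infDist_eq_iInf (x := x), Real.mul_iInf_of_nonneg K.coe_nonneg]
  exact le_ciInf fun y ↦ (infDist_le_dist_of_mem (hS y.2)).trans (hf.dist_le_mul x y)

section DualAction

open scoped Matrix.Norms.L2Operator

variable {n : Type*} [Fintype n]

lemma dualAct_dualAct (A B : Matrix n n ℝ) (ξ : EuclideanSpace ℝ n) :
    dualAct B (dualAct A ξ) = dualAct (A * B) ξ := by
  simp only [dualAct, Matrix.transpose_mul, ← Matrix.mulVec_mulVec]
  rfl

@[simp]
lemma dualAct_one [DecidableEq n] (ξ : EuclideanSpace ℝ n) : dualAct (1 : Matrix n n ℝ) ξ = ξ := by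
  simp [dualAct]

lemma dualAct_sub_dualAct (A : Matrix n n ℝ) (ξ η : EuclideanSpace ℝ n) :
    dualAct A ξ - dualAct A η = dualAct A (ξ - η) := by
  simp only [dualAct, map_sub, Matrix.mulVec_sub]

lemma dualAct_sub_self [DecidableEq n] (A : Matrix n n ℝ) (ξ : EuclideanSpace ℝ n) :
    dualAct A ξ - ξ = dualAct (A - 1) ξ := by
  simp only [dualAct, Matrix.transpose_sub, Matrix.transpose_one, Matrix.sub_mulVec,
    Matrix.one_mulVec, map_sub, ContinuousLinearEquiv.symm_apply_apply]

lemma opNorm_transpose [DecidableEq n] (A : Matrix n n ℝ) : opNorm Aᵀ = opNorm A := by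
  change ‖Aᵀ‖ = ‖A‖
  exact Matrix.l2_opNorm_conjTranspose A

lemma norm_dualAct_le [DecidableEq n] (A : Matrix n n ℝ) (ξ : EuclideanSpace ℝ n) :
    ‖dualAct A ξ‖ ≤ opNorm A * ‖ξ‖ := by
  rw [← opNorm_transpose]
  exact (LinearMap.toContinuousLinearMap (toEuclideanLin Aᵀ)).le_opNorm ξ

lemma norm_dualAct_sub_self_le [DecidableEq n] (A : Matrix n n ℝ) (ξ : EuclideanSpace ℝ n) :
    ‖dualAct A ξ - ξ‖ ≤ opNorm (A - 1) * ‖ξ‖ :=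
  dualAct_sub_self A ξ ▸ norm_dualAct_le (A - 1) ξ

variable [DecidableEq n] {A : Matrix n n ℝ}

lemma norm_le_two_mul_norm_dualAct (hA : opNorm (A - 1) < 1 / 2) (ξ : EuclideanSpace ℝ n) :
    ‖ξ‖ ≤ 2 * ‖dualAct A ξ‖ := by
  have := norm_dualAct_sub_self_le A ξ
  have := norm_sub_norm_le ξ (dualAct A ξ)
  rw [norm_sub_rev] at this
  nlinarith [norm_nonneg ξ]

lemma lipschitzWith_two_dualAct (hA : opNorm (A - 1) < 1 / 2) : LipschitzWith 2 (dualAct A) := by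
  refine LipschitzWith.of_dist_le_mul fun ξ η ↦ ?_
  rw [dist_eq_norm, dist_eq_norm, dualAct_sub_dualAct]
  have := norm_dualAct_sub_self_le A (ξ - η)
  have := norm_le_insert' (dualAct A (ξ - η)) (ξ - η)
  push_cast
  nlinarith [norm_nonneg (ξ - η)]

lemma env_dualAct_le {S : Set (EuclideanSpace ℝ n)} (hS : Set.MapsTo (dualAct A) S S)
    (hA : opNorm (A - 1) < 1 / 2) (ξ : EuclideanSpace ℝ n) :
    env S (dualAct A ξ) ≤ 12 * env S ξ := by
  have hdist : infDist (dualAct A ξ) S ≤ 2 * infDist ξ S := by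
    exact_mod_cast infDist_le_mul_infDist_of_mapsTo (lipschitzWith_two_dualAct hA) hS ξ
  calc env S (dualAct A ξ) ≤ 3 * envApprox S (dualAct A ξ) := env_le_three_mul_envApprox _ _
    _ ≤ 3 * (4 * envApprox S ξ) := by
      gcongr
      exact envApprox_le_four_mul hdist (norm_le_two_mul_norm_dualAct hA ξ)
    _ ≤ 3 * (4 * env S ξ) := by gcongr; exact envApprox_le_env S ξ
    _ = 12 * env S ξ := by ring

end DualAction

section DualOrbit

variable {n : Type*} [Fintype n] [DecidableEq n] {H : Subgroup (GL n ℝ)} {ξ₀ : EuclideanSpace ℝ n}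

lemma mapsTo_dualAct_compl_dualOrbit {u : GL n ℝ} (hu : u ∈ H) :
    Set.MapsTo (dualAct ↑u) (dualOrbit H ξ₀)ᶜ (dualOrbit H ξ₀)ᶜ := by
  rintro η hη ⟨g, hg, hgη⟩
  refine hη ⟨g * u⁻¹, mul_mem hg (inv_mem hu), ?_⟩
  rw [Units.val_mul, ← dualAct_dualAct, hgη, dualAct_dualAct, ← Units.val_mul, mul_inv_cancel,
    Units.val_one, dualAct_one]

lemma AH_mul_le (h u : H) (hu : opNorm ((↑(u : GL n ℝ) : Matrix n n ℝ) - 1) < 1 / 2) :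
    AH H ξ₀ (h * u) ≤ 12 * AH H ξ₀ h := by
  have := env_dualAct_le (mapsTo_dualAct_compl_dualOrbit (ξ₀ := ξ₀) u.2) hu
    (dualAct (↑(h : GL n ℝ)) ξ₀)
  rwa [dualAct_dualAct] at this

lemma AH_nonneg (h : H) : 0 ≤ AH H ξ₀ h :=
  env_nonneg _ _

end DualOrbit

lemma lintegral_lt_top_iff_of_le_of_le_const_mul {α : Type*} [MeasurableSpace α] {μ : Measure α}
    {f g : α → ENNReal} {c : ENNReal} (hc : c ≠ ⊤) (hgf : g ≤ f) (hfg : ∀ x, f x ≤ c * g x) :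
    ∫⁻ x, f x ∂μ < ⊤ ↔ ∫⁻ x, g x ∂μ < ⊤ := by
  refine ⟨(lintegral_mono hgf).trans_lt, fun hg ↦ (lintegral_mono hfg).trans_lt ?_⟩
  rw [lintegral_const_mul' c g hc]
  exact ENNReal.mul_lt_top hc.lt_top hg

theorem stmt8_general (d : ℕ) (H : Subgroup (GL (Fin d) ℝ))
    (ξ₀ : EuclideanSpace ℝ (Fin d))
    [MeasurableSpace ↥H]
    (μ : Measure ↥H)
    (U : Set ↥H) (hUnhd : U ∈ nhds (1 : ↥H))
    (hUsmall : ∀ u ∈ U, opNorm ((↑(u : GL (Fin d) ℝ) : Matrix (Fin d) (Fin d) ℝ) - 1) < 1 / 2) :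
    (∃ C : ℝ, 1 ≤ C ∧ ∀ (h : ↥H) (ℓ : ℕ),
        AH H ξ₀ h ^ ℓ ≤ (⨆ u : U, AH H ξ₀ (h * ↑u) ^ ℓ) ∧
        (⨆ u : U, AH H ξ₀ (h * ↑u) ^ ℓ) ≤ C ^ ℓ * AH H ξ₀ h ^ ℓ) ∧
      ∀ m : ↥H → ℝ, Continuous m → (∀ h, 0 < m h) → (∀ x y, m (x * y) ≤ m x * m y) →
        ∀ ℓ : ℕ,
          ((∫⁻ h : ↥H, (⨆ u ∈ U, ENNReal.ofReal (AH H ξ₀ (h * u) ^ ℓ)) *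
              ENNReal.ofReal (m h) ∂μ) < ⊤ ↔
            (∫⁻ h : ↥H, ENNReal.ofReal (AH H ξ₀ h ^ ℓ * m h) ∂μ) < ⊤) := by
  have h1U : (1 : ↥H) ∈ U := mem_of_mem_nhds hUnhd
  have : Nonempty U := ⟨⟨1, h1U⟩⟩
  have hpow (h : H) (ℓ : ℕ) (u : H) (hu : u ∈ U) :
      AH H ξ₀ (h * u) ^ ℓ ≤ 12 ^ ℓ * AH H ξ₀ h ^ ℓ := by
    rw [← mul_pow]
    exact pow_le_pow_left₀ (AH_nonneg _) (AH_mul_le h u (hUsmall u hu)) ℓ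
  refine ⟨⟨12, by norm_num, fun h ℓ ↦ ⟨?_, ciSup_le fun u ↦ hpow h ℓ u u.2⟩⟩,
    fun m _ _ _ ℓ ↦ lintegral_lt_top_iff_of_le_of_le_const_mul ENNReal.ofReal_ne_top
      (c := ENNReal.ofReal (12 ^ ℓ)) (fun h ↦ ?_) (fun h ↦ ?_)⟩
  · have hbdd : BddAbove (Set.range fun u : U ↦ AH H ξ₀ (h * ↑u) ^ ℓ) :=
      ⟨_, Set.forall_mem_range.2 fun u ↦ hpow h ℓ u u.2⟩
    simpa using le_ciSup hbdd ⟨1, h1U⟩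
  · rw [ENNReal.ofReal_mul (pow_nonneg (AH_nonneg h) ℓ)]
    gcongr
    simpa using le_biSup (fun u ↦ ENNReal.ofReal (AH H ξ₀ (h * u) ^ ℓ)) h1U
  · rw [ENNReal.ofReal_mul (pow_nonneg (AH_nonneg h) ℓ), ← mul_assoc,
      ← ENNReal.ofReal_mul (by positivity)]
    gcongr
    exact iSup₂_le fun u hu ↦ ENNReal.ofReal_le_ofReal (hpow h ℓ u hu)

/-- For an irreducibly admissible `H` whose dual orbit complement is stable under
positive dilations, and a compact unit neighborhood `U ⊆ {u : ‖u − I‖ < 1/2}` in `H`, there is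
`C ≥ 1` with `A_H(h)^ℓ ≤ sup_{u∈U} A_H(hu)^ℓ ≤ C^ℓ·A_H(h)^ℓ` for all `h, ℓ`; consequently for any
weight `m`, the maximal function of `A_H^ℓ` is `L¹_m`-integrable iff `A_H^ℓ` is. -/
theorem stmt8 (d : ℕ) (H : Subgroup (GL (Fin d) ℝ))
    (hHclosed : IsClosed (H : Set (GL (Fin d) ℝ)))
    (ξ₀ : EuclideanSpace ℝ (Fin d))
    (hOopen : IsOpen (dualOrbit H ξ₀))
    (hOnull : volume (dualOrbit H ξ₀)ᶜ = 0)
    (hstab : IsCompact {h : GL (Fin d) ℝ | h ∈ H ∧ dualAct (↑h) ξ₀ = ξ₀})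
    (hscal : ∀ t : ℝ, 0 < t → ∀ ξ ∈ (dualOrbit H ξ₀)ᶜ, t • ξ ∈ (dualOrbit H ξ₀)ᶜ)
    [MeasurableSpace ↥H] [BorelSpace ↥H]
    (μ : Measure ↥H) [μ.IsHaarMeasure]
    (U : Set ↥H) (hUcomp : IsCompact U) (hUnhd : U ∈ nhds (1 : ↥H))
    (hUsmall : ∀ u ∈ U, opNorm ((↑(u : GL (Fin d) ℝ) : Matrix (Fin d) (Fin d) ℝ) - 1) < 1 / 2) :
    (∃ C : ℝ, 1 ≤ C ∧ ∀ (h : ↥H) (ℓ : ℕ),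
        AH H ξ₀ h ^ ℓ ≤ (⨆ u : U, AH H ξ₀ (h * ↑u) ^ ℓ) ∧
        (⨆ u : U, AH H ξ₀ (h * ↑u) ^ ℓ) ≤ C ^ ℓ * AH H ξ₀ h ^ ℓ) ∧
      ∀ m : ↥H → ℝ, Continuous m → (∀ h, 0 < m h) → (∀ x y, m (x * y) ≤ m x * m y) →
        ∀ ℓ : ℕ,
          ((∫⁻ h : ↥H, (⨆ u ∈ U, ENNReal.ofReal (AH H ξ₀ (h * u) ^ ℓ)) *
              ENNReal.ofReal (m h) ∂μ) < ⊤ ↔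
            (∫⁻ h : ↥H, ENNReal.ofReal (AH H ξ₀ h ^ ℓ * m h) ∂μ) < ⊤) :=
  stmt8_general d H ξ₀ μ U hUnhd hUsmall
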